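/- arXiv:1208.6417 — 2 statements merged into one kernel-verified Lean document; each statement's English description precedes it below -/
import Mathlib

section
/- Let E, F, G be topological vector spaces over ℂ, with F and G locally convex and Hausdorff, and let d¹ : E → F and d² : F → G be continuous linear maps with d² ∘ d¹ = 0. Assume that every continuous linear functional T : F → ℂ with T ∘ d¹ = 0 factors as T = S ∘ d² for some continuous linear functional S : G → ℂ. Consider the cohomology group H = ker d² / (range d¹), i.e. the quotient of the submodule ker d² ⊆ F (with the subspace topology) by the submodule range d¹ ⊆ ker d², endowed with the quotient topology. If H is Hausdorff, then H = 0, i.e. ker d² = range d¹. Thus either the cohomology at F vanishes or it is not Hausdorff. -/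
/-- **Corollary 2.6: the cohomology at `F` is either zero or non-Hausdorff.**
Let `E, F, G` be topological vector spaces over `ℂ`, with `F` and `G` locally
convex (as real topological vector spaces) and Hausdorff, and let
`d¹ : E → F`, `d² : F → G` be continuous linear maps with `d² ∘ d¹ = 0`.
Assume that every continuous linear functional `T : F → ℂ` with `T ∘ d¹ = 0`
factors through `d²` via a continuous linear functional on `G`.  If the
cohomology group `ker d² / range d¹`, i.e. the quotient of the topological
subspace `ker d² ⊆ F` by the image of `range d¹` in it, is Hausdorff in the
quotient topology, then `ker d² = range d¹`. -/
theorem ker_eq_range_of_dual_homology_vanishes_of_t2_cohomology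
    {E F G : Type*}
    [AddCommGroup E] [Module ℂ E] [TopologicalSpace E]
    [AddCommGroup F] [Module ℂ F] [TopologicalSpace F]
    [IsTopologicalAddGroup F] [ContinuousSMul ℂ F]
    [Module ℝ F] [IsScalarTower ℝ ℂ F] [LocallyConvexSpace ℝ F] [T2Space F]
    [AddCommGroup G] [Module ℂ G] [TopologicalSpace G]
    [IsTopologicalAddGroup G] [ContinuousSMul ℂ G]
    [Module ℝ G] [IsScalarTower ℝ ℂ G] [LocallyConvexSpace ℝ G] [T2Space G]
    (d₁ : E →L[ℂ] F) (d₂ : F →L[ℂ] G)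
    (hcomp : ∀ x : E, d₂ (d₁ x) = 0)
    (hdual : ∀ T : F →L[ℂ] ℂ, (∀ x : E, T (d₁ x) = 0) →
      ∃ S : G →L[ℂ] ℂ, ∀ y : F, T y = S (d₂ y))
    (hT2 : T2Space
      ((LinearMap.ker (d₂ : F →ₗ[ℂ] G)) ⧸
        ((LinearMap.range (d₁ : E →ₗ[ℂ] F)).comap (LinearMap.ker (d₂ : F →ₗ[ℂ] G)).subtype))) :
    LinearMap.ker (d₂ : F →ₗ[ℂ] G) = LinearMap.range (d₁ : E →ₗ[ℂ] F) := by
  haveI := hT2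
  set N := (LinearMap.range (d₁ : E →ₗ[ℂ] F)).comap (LinearMap.ker (d₂ : F →ₗ[ℂ] G)).subtype with hN
  -- N is closed in ker d₂ since the quotient is T2 (hence T1)
  have hNclosed : IsClosed ((N : Set (LinearMap.ker (d₂ : F →ₗ[ℂ] G)))) := by
    have h0 : IsClosed ({(0 : (LinearMap.ker (d₂ : F →ₗ[ℂ] G)) ⧸ N)} : Set _) := isClosed_singleton
    have hpre := h0.preimage (continuous_quot_mk :
      Continuous (Quot.mk _ : (LinearMap.ker (d₂ : F →ₗ[ℂ] G)) → (LinearMap.ker (d₂ : F →ₗ[ℂ] G)) ⧸ N))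
    convert hpre using 1
    ext x
    exact Iff.symm (Submodule.Quotient.mk_eq_zero N)
  -- range d₁ ⊆ ker d₂
  have hsub : LinearMap.range (d₁ : E →ₗ[ℂ] F) ≤ LinearMap.ker (d₂ : F →ₗ[ℂ] G) := by
    rintro _ ⟨x, rfl⟩
    exact hcomp x
  refine le_antisymm (fun y hy => ?_) hsub
  -- Show y ∈ closure (range d₁) in F
  have hyc : y ∈ closure ((LinearMap.range (d₁ : E →ₗ[ℂ] F) : Submodule ℂ F) : Set F) := by
    by_contra hyc
    set t := ((LinearMap.range (d₁ : E →ₗ[ℂ] F)).topologicalClosure : Set F) with ht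
    have hconv : Convex ℝ t :=
      ((Submodule.restrictScalars ℝ
        ((LinearMap.range (d₁ : E →ₗ[ℂ] F)).topologicalClosure)).convex)
    have hclosed : IsClosed t := (LinearMap.range (d₁ : E →ₗ[ℂ] F)).isClosed_topologicalClosure
    have hyt : y ∉ t := by
      simpa [ht, Submodule.topologicalClosure_coe] using hyc
    obtain ⟨f, u, hfy, hft⟩ :=
      RCLike.geometric_hahn_banach_point_closed (𝕜 := ℂ) hconv hclosed hyt
    -- f vanishes on t
    have hzero : ∀ b ∈ t, f b = 0 := by
      intro b hb
      by_contra hfb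
      have hcb : (((u : ℂ) - 1) / f b) • b ∈ t := by
        have : b ∈ (LinearMap.range (d₁ : E →ₗ[ℂ] F)).topologicalClosure := hb
        exact Submodule.smul_mem _ _ this
      have := hft _ hcb
      rw [map_smul, smul_eq_mul, div_mul_cancel₀ _ hfb] at this
      simp at this
      linarith
    -- u < 0 since 0 ∈ t
    have h0t : (0 : F) ∈ t := (Submodule.zero_mem _)
    have hu0 : u < 0 := by simpa using hft 0 h0t
    -- f vanishes on range d₁, so factors through d₂
    obtain ⟨S, hS⟩ := hdual f (fun x => hzero (d₁ x)
      (Submodule.le_topologicalClosure _ ⟨x, rfl⟩))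
    have : f y = 0 := by
      rw [hS y, show d₂ y = 0 from hy, map_zero]
    rw [this] at hfy
    simp at hfy
    linarith
  -- transfer closure to the subspace ker d₂ and use closedness of N
  have hmem : (⟨y, hy⟩ : LinearMap.ker (d₂ : F →ₗ[ℂ] G)) ∈ N := by
    have : (⟨y, hy⟩ : LinearMap.ker (d₂ : F →ₗ[ℂ] G)) ∈ closure ((N : Set (LinearMap.ker (d₂ : F →ₗ[ℂ] G)))) := by
      rw [closure_subtype]
      have himg : (Subtype.val '' ((N : Set (LinearMap.ker (d₂ : F →ₗ[ℂ] G)))))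
          = ((LinearMap.range (d₁ : E →ₗ[ℂ] F) : Submodule ℂ F) : Set F) := by
        ext z
        constructor
        · rintro ⟨⟨w, hw⟩, hwN, rfl⟩; exact hwN
        · intro hz; exact ⟨⟨z, hsub hz⟩, hz, rfl⟩
      rw [himg]
      exact hyc
    rwa [hNclosed.closure_eq] at this
  exact hmem
end

section
/- Let E, F, G be complex Hilbert spaces, let S be a densely defined linear operator from E to F and T a densely defined linear operator from F to G, forming a complex in the sense that for every x ∈ dom S one has S x ∈ dom T and T (S x) = 0. Assume the homology of the dual complex vanishes at F, i.e. every y ∈ F with y ∈ dom S† and S† y = 0 can be written as y = T† z for some z ∈ dom T†. Then ker T ⊆ closure (range S); in particular, if the range of S is closed in F, then ker T = range S, so either the cohomology ker T / range S vanishes or the range of S is not closed. -/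
open scoped InnerProductSpace

/-- **Hilbert-space (L²) version of Corollary 2.6.**
Let `E, F, G` be complex Hilbert spaces, `S` a densely defined operator from
`E` to `F` and `T` a densely defined operator from `F` to `G` forming a
complex (`T (S x) = 0` for all `x ∈ dom S`).  Assume the homology of the dual
complex vanishes at `F`: every `y ∈ dom S†` with `S† y = 0` can be written as
`y = T† z` for some `z ∈ dom T†`.  Then `ker T ⊆ closure (range S)`, and in
particular if the range of `S` is closed in `F` then `ker T = range S`. -/
theorem ker_subset_closure_range_of_dual_homology_vanishes
    {E F G : Type*}
    [NormedAddCommGroup E] [InnerProductSpace ℂ E] [CompleteSpace E]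
    [NormedAddCommGroup F] [InnerProductSpace ℂ F] [CompleteSpace F]
    [NormedAddCommGroup G] [InnerProductSpace ℂ G] [CompleteSpace G]
    (S : E →ₗ.[ℂ] F) (T : F →ₗ.[ℂ] G)
    (hS : Dense (S.domain : Set E)) (hT : Dense (T.domain : Set F))
    (hcomp : ∀ x : S.domain, ∃ hx : (S x : F) ∈ T.domain, T ⟨S x, hx⟩ = 0)
    (hdual : ∀ y : F, ∀ hy : y ∈ S.adjoint.domain, S.adjoint ⟨y, hy⟩ = 0 →
      ∃ z : T.adjoint.domain, T.adjoint z = y) :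
    {y : F | ∃ hy : y ∈ T.domain, T ⟨y, hy⟩ = 0} ⊆
        closure (Set.range fun x : S.domain => S x) ∧
      (IsClosed (Set.range fun x : S.domain => S x) →
        {y : F | ∃ hy : y ∈ T.domain, T ⟨y, hy⟩ = 0} =
          Set.range fun x : S.domain => S x) := by
  set R : Submodule ℂ F := LinearMap.range S.toFun with hR
  have hRrange : (R : Set F) = Set.range fun x : S.domain => S x := by
    ext y; simp [hR, LinearMap.mem_range, Set.mem_range]
  have hsub : {y : F | ∃ hy : y ∈ T.domain, T ⟨y, hy⟩ = 0} ⊆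
      closure (Set.range fun x : S.domain => S x) := by
    intro u hu
    obtain ⟨hu_mem, hu0⟩ := hu
    rw [← hRrange, ← Submodule.topologicalClosure_coe, ← R.orthogonal_orthogonal_eq_closure]
    show u ∈ (Rᗮᗮ : Submodule ℂ F)
    rw [Submodule.mem_orthogonal]
    intro y hy
    -- y ∈ Rᗮ : ⟪v, y⟫ = 0 for all v ∈ R
    have hy' : ∀ x : S.domain, (inner ℂ y (S x) : ℂ) = 0 := by
      intro x
      have : (inner ℂ (S x) y : ℂ) = 0 :=
        (Submodule.mem_orthogonal R y).mp hy _ (LinearMap.mem_range_self _ x)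
      rw [← inner_conj_symm, this, map_zero]
    -- y is in dom S† with S† y = 0
    have hy_dom : y ∈ S.adjoint.domain := by
      apply LinearPMap.mem_adjoint_domain_of_exists
      exact ⟨0, fun x => by simp [hy' x]⟩
    have hy_adj : S.adjoint ⟨y, hy_dom⟩ = 0 := by
      exact LinearPMap.adjoint_apply_eq hS _ (fun x => by simp [hy' x])
    obtain ⟨z, hz⟩ := hdual y hy_dom hy_adj
    -- ⟪y, u⟫ = ⟪T† z, u⟫ = ⟪z, T u⟫ = 0
    have := (T.adjoint_isFormalAdjoint hT) z ⟨u, hu_mem⟩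
    rw [hz, hu0] at this
    simpa using this
  refine ⟨hsub, fun hclosed => ?_⟩
  apply Set.Subset.antisymm
  · intro u hu
    have := hsub hu
    rwa [hclosed.closure_eq] at this
  · rintro u ⟨x, rfl⟩
    obtain ⟨hx, hx0⟩ := hcomp x
    exact ⟨hx, hx0⟩
end
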